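/- Let X be a real Banach space that is an M-ideal in its bidual, i.e., with ι_X : X → X** and ι_{X*} : X* → X*** the canonical isometric embeddings and, for F ∈ X***, πF := ι_{X*}(F ∘ ι_X), one has ‖F‖ = ‖πF‖ + ‖F − πF‖ for every F ∈ X***. Then every closed subspace Y of X is an M-ideal in its bidual: with ι_Y : Y → Y**, ι_{Y*} : Y* → Y***, and π_Y G := ι_{Y*}(G ∘ ι_Y) for G ∈ Y***, one has ‖G‖ = ‖π_Y G‖ + ‖G − π_Y G‖ for every G ∈ Y***. -/

import Mathlib

noncomputable section

namespace NormedSpace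

/-- The topological dual of a seminormed space `E`, as `NormedSpace.Dual` was defined in the
older Mathlib (with its own norm instances); Mathlib has replaced it by `StrongDual`. -/
abbrev Dual (𝕜 : Type*) [NontriviallyNormedField 𝕜] (E : Type*) [SeminormedAddCommGroup E]
    [NormedSpace 𝕜 E] : Type _ :=
  E →L[𝕜] 𝕜

instance instSeminormedAddCommGroupDual (𝕜 : Type*) [NontriviallyNormedField 𝕜] (E : Type*)
    [SeminormedAddCommGroup E] [NormedSpace 𝕜 E] : SeminormedAddCommGroup (Dual 𝕜 E) :=
  ContinuousLinearMap.toSeminormedAddCommGroup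

instance instNormedSpaceDual (𝕜 : Type*) [NontriviallyNormedField 𝕜] (E : Type*)
    [SeminormedAddCommGroup E] [NormedSpace 𝕜 E] : NormedSpace 𝕜 (Dual 𝕜 E) :=
  ContinuousLinearMap.toNormedSpace

instance instFunLikeDual (𝕜 : Type*) [NontriviallyNormedField 𝕜] (E : Type*)
    [SeminormedAddCommGroup E] [NormedSpace 𝕜 E] : FunLike (Dual 𝕜 E) E 𝕜 :=
  ContinuousLinearMap.funLike

end NormedSpace

end

/-!
Let `T : Y → X` be the inclusion. By Hahn–Banach its bitranspose `T** : Y** → X**` is an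
isometry, so a second application of Hahn–Banach extends every `G ∈ Y***` to some `Φ ∈ X***`
with `G = Φ ∘ T**` and `‖Φ‖ = ‖G‖`. The projection `π` is natural, `π (Φ ∘ T**) = (π Φ) ∘ T**`,
and precomposition with `T**` does not increase norms, hence
`‖π G‖ + ‖G - π G‖ ≤ ‖π Φ‖ + ‖Φ - π Φ‖ = ‖Φ‖ = ‖G‖`; the reverse inequality is the triangle
inequality.
-/

open NormedSpace ContinuousLinearMap

section Transpose

variable {𝕜 : Type*} [NontriviallyNormedField 𝕜]
  {E F : Type*} [SeminormedAddCommGroup E] [NormedSpace 𝕜 E]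
  [SeminormedAddCommGroup F] [NormedSpace 𝕜 F]

noncomputable def ContinuousLinearMap.dualMap (T : E →L[𝕜] F) : Dual 𝕜 F →L[𝕜] Dual 𝕜 E :=
  (compL 𝕜 E F 𝕜).flip T

@[simp]
theorem ContinuousLinearMap.dualMap_apply (T : E →L[𝕜] F) (f : Dual 𝕜 F) :
    T.dualMap f = f.comp T :=
  rfl

theorem ContinuousLinearMap.norm_dualMap_le (T : E →L[𝕜] F) : ‖T.dualMap‖ ≤ ‖T‖ :=
  opNorm_le_bound _ (norm_nonneg T) fun f => (opNorm_comp_le f T).trans_eq (mul_comm _ _)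

theorem LinearIsometry.norm_dualMap_le_one (T : E →ₗᵢ[𝕜] F) :
    ‖T.toContinuousLinearMap.dualMap‖ ≤ 1 :=
  (norm_dualMap_le _).trans T.norm_toContinuousLinearMap_le

theorem LinearIsometry.norm_dualMap_apply_le (T : E →ₗᵢ[𝕜] F) (f : Dual 𝕜 F) :
    ‖T.toContinuousLinearMap.dualMap f‖ ≤ ‖f‖ := by
  simpa using le_of_opNorm_le _ T.norm_dualMap_le_one f

variable (𝕜 E) in
noncomputable def tridualProj : Dual 𝕜 (Dual 𝕜 (Dual 𝕜 E)) →L[𝕜] Dual 𝕜 (Dual 𝕜 (Dual 𝕜 E)) :=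
  (inclusionInDoubleDual 𝕜 (Dual 𝕜 E)).comp (inclusionInDoubleDual 𝕜 E).dualMap

theorem tridualProj_dualMap_dualMap_dualMap (T : E →L[𝕜] F) (Φ : Dual 𝕜 (Dual 𝕜 (Dual 𝕜 F))) :
    tridualProj 𝕜 E (T.dualMap.dualMap.dualMap Φ) =
      T.dualMap.dualMap.dualMap (tridualProj 𝕜 F Φ) :=
  rfl

end Transpose

section HahnBanach

variable {𝕜 : Type*} [RCLike 𝕜]
  {E F : Type*} [NormedAddCommGroup E] [NormedSpace 𝕜 E]
  [NormedAddCommGroup F] [NormedSpace 𝕜 F]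

theorem LinearIsometry.exists_dualMap_eq_norm_eq (T : E →ₗᵢ[𝕜] F) (g : Dual 𝕜 E) :
    ∃ f : Dual 𝕜 F, T.toContinuousLinearMap.dualMap f = g ∧ ‖f‖ = ‖g‖ := by
  let e := T.equivRange
  obtain ⟨f, hf, hnorm⟩ := _root_.exists_extension_norm_eq (LinearMap.range T.toLinearMap)
    (g ∘L (e.symm : LinearMap.range T.toLinearMap →L[𝕜] E))
  refine ⟨f, ?_, ?_⟩
  · ext x
    simpa [e] using hf (e x)
  · rw [hnorm]
    exact opNorm_comp_linearIsometryEquiv g e.symm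

theorem LinearIsometry.norm_dualMap_dualMap_apply (T : E →ₗᵢ[𝕜] F) (φ : Dual 𝕜 (Dual 𝕜 E)) :
    ‖T.toContinuousLinearMap.dualMap.dualMap φ‖ = ‖φ‖ := by
  refine le_antisymm ?_ (opNorm_le_bound _ (norm_nonneg _) fun g => ?_)
  · calc ‖φ.comp T.toContinuousLinearMap.dualMap‖
          ≤ ‖φ‖ * ‖T.toContinuousLinearMap.dualMap‖ := opNorm_comp_le _ _
      _ ≤ ‖φ‖ := mul_le_of_le_one_right (norm_nonneg φ) T.norm_dualMap_le_one
  obtain ⟨f, rfl, hf⟩ := T.exists_dualMap_eq_norm_eq g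
  rw [← hf]
  exact le_opNorm (T.toContinuousLinearMap.dualMap.dualMap φ) f

noncomputable def LinearIsometry.bidualMap (T : E →ₗᵢ[𝕜] F) :
    Dual 𝕜 (Dual 𝕜 E) →ₗᵢ[𝕜] Dual 𝕜 (Dual 𝕜 F) where
  toLinearMap := T.toContinuousLinearMap.dualMap.dualMap
  norm_map' := T.norm_dualMap_dualMap_apply

end HahnBanach

section MIdeal

variable {𝕜 : Type*} [RCLike 𝕜]
  {E F : Type*} [NormedAddCommGroup E] [NormedSpace 𝕜 E]
  [NormedAddCommGroup F] [NormedSpace 𝕜 F]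

variable (𝕜 E) in
def IsMIdealInBidual : Prop :=
  ∀ Φ : Dual 𝕜 (Dual 𝕜 (Dual 𝕜 E)), ‖Φ‖ = ‖tridualProj 𝕜 E Φ‖ + ‖Φ - tridualProj 𝕜 E Φ‖

theorem IsMIdealInBidual.of_linearIsometry (T : E →ₗᵢ[𝕜] F) (hF : IsMIdealInBidual 𝕜 F) :
    IsMIdealInBidual 𝕜 E := by
  intro Ψ
  obtain ⟨Φ, rfl, hnorm⟩ := LinearIsometry.exists_dualMap_eq_norm_eq
    (E := Dual 𝕜 (Dual 𝕜 E)) (F := Dual 𝕜 (Dual 𝕜 F)) T.bidualMap Ψ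
  set S := T.bidualMap.toContinuousLinearMap.dualMap
  have hproj : tridualProj 𝕜 E (S Φ) = S (tridualProj 𝕜 F Φ) :=
    tridualProj_dualMap_dualMap_dualMap T.toContinuousLinearMap Φ
  refine le_antisymm ?_ ?_
  · simpa using norm_add_le (tridualProj 𝕜 E (S Φ)) (S Φ - tridualProj 𝕜 E (S Φ))
  calc ‖tridualProj 𝕜 E (S Φ)‖ + ‖S Φ - tridualProj 𝕜 E (S Φ)‖
        = ‖S (tridualProj 𝕜 F Φ)‖ + ‖S (Φ - tridualProj 𝕜 F Φ)‖ := by rw [hproj, map_sub]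
    _ ≤ ‖tridualProj 𝕜 F Φ‖ + ‖Φ - tridualProj 𝕜 F Φ‖ :=
        add_le_add (T.bidualMap.norm_dualMap_apply_le _) (T.bidualMap.norm_dualMap_apply_le _)
    _ = ‖Φ‖ := (hF Φ).symm
    _ = ‖S Φ‖ := hnorm

end MIdeal

theorem closed_subspace_mIdeal_in_bidual_general
    (X : Type) [NormedAddCommGroup X] [NormedSpace ℝ X]
    (hM : ∀ F : Dual ℝ (Dual ℝ (Dual ℝ X)),
      ‖F‖ = ‖inclusionInDoubleDual ℝ (Dual ℝ X) (F.comp (inclusionInDoubleDual ℝ X))‖ +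
        ‖F - inclusionInDoubleDual ℝ (Dual ℝ X) (F.comp (inclusionInDoubleDual ℝ X))‖)
    (Y : Subspace ℝ X) :
    ∀ G : Dual ℝ (Dual ℝ (Dual ℝ Y)),
      ‖G‖ = ‖inclusionInDoubleDual ℝ (Dual ℝ Y) (G.comp (inclusionInDoubleDual ℝ Y))‖ +
        ‖G - inclusionInDoubleDual ℝ (Dual ℝ Y) (G.comp (inclusionInDoubleDual ℝ Y))‖ :=
  IsMIdealInBidual.of_linearIsometry Y.subtypeₗᵢ hM

/-- If a real Banach space `X` is an M-ideal in its bidual, then so is every closed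
subspace of `X`. -/
theorem closed_subspace_mIdeal_in_bidual
    (X : Type) [NormedAddCommGroup X] [NormedSpace ℝ X] [CompleteSpace X]
    (hM : ∀ F : Dual ℝ (Dual ℝ (Dual ℝ X)),
      ‖F‖ = ‖inclusionInDoubleDual ℝ (Dual ℝ X) (F.comp (inclusionInDoubleDual ℝ X))‖ +
        ‖F - inclusionInDoubleDual ℝ (Dual ℝ X) (F.comp (inclusionInDoubleDual ℝ X))‖)
    (Y : Subspace ℝ X) (hY : IsClosed (Y : Set X)) :
    ∀ G : Dual ℝ (Dual ℝ (Dual ℝ Y)),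
      ‖G‖ = ‖inclusionInDoubleDual ℝ (Dual ℝ Y) (G.comp (inclusionInDoubleDual ℝ Y))‖ +
        ‖G - inclusionInDoubleDual ℝ (Dual ℝ Y) (G.comp (inclusionInDoubleDual ℝ Y))‖ :=
  closed_subspace_mIdeal_in_bidual_general X hM Y
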